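/- arXiv:2110.14912 — 2 statements merged into one kernel-verified Lean document; each statement's English description precedes it below -/
import Mathlib

section
/- There exists a constant C > 0 such that for every Schwartz function v : ℝ² → ℂ one has ∫_{ℝ²} ⟨x⟩² |∇v(x)|² dx ≤ C ( ‖Δ v‖²_{L²} + ‖⟨x⟩² v‖²_{L²} ). -/
open MeasureTheory Complex

noncomputable section

abbrev E2 : Type := EuclideanSpace ℝ (Fin 2)

/-- Partial derivative in the `i`-th coordinate direction. -/
noncomputable def pd (i : Fin 2) (f : E2 → ℂ) : E2 → ℂ :=
  fun x => fderiv ℝ f x (EuclideanSpace.single i 1)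

/-- The Laplacian on `ℝ²`. -/
noncomputable def lap (f : E2 → ℂ) : E2 → ℂ :=
  fun x => ∑ i : Fin 2, pd i (pd i f) x

/-- The harmonic oscillator `A f = -Δ f + |x|² f`. -/
noncomputable def Aop (f : E2 → ℂ) : E2 → ℂ :=
  fun x => -lap f x + (‖x‖ : ℂ)^2 * f x

/-- Time derivative of a time-dependent function. -/
noncomputable def tderiv (F : ℝ → E2 → ℂ) : ℝ → E2 → ℂ :=
  fun t x => deriv (fun s => F s x) t

/-- Squared euclidean norm of the gradient, `|∇f|²(x)`. -/
noncomputable def gradSq (f : E2 → ℂ) (x : E2) : ℝ := ∑ i : Fin 2, ‖pd i f x‖^2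

/-- The `L²` norm. -/
noncomputable def L2norm (f : E2 → ℂ) : ℝ := Real.sqrt (∫ x : E2, ‖f x‖^2)

/-- The `ℋ¹` norm: `(‖∇φ‖² + ‖|x|φ‖²)^(1/2)`. -/
noncomputable def H1norm (f : E2 → ℂ) : ℝ :=
  Real.sqrt ((∫ x : E2, gradSq f x) + ∫ x : E2, ‖x‖^2 * ‖f x‖^2)

/-- A Schwartz-regular solution of the cubic NLS with harmonic potential,
`i ∂ₜ u - Δu + |x|² u + σ u |u|² = 0`. -/
def IsSolution (σ : ℝ) (u : ℝ → SchwartzMap E2 ℂ) : Prop :=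
  ContDiff ℝ (⊤ : ℕ∞) (fun p : ℝ × E2 => u p.1 p.2) ∧
  ∀ (t : ℝ) (x : E2), Complex.I * deriv (fun s => u s x) t - lap (fun y => u t y) x
    + (‖x‖ : ℂ)^2 * u t x + (σ : ℂ) * u t x * (‖u t x‖ : ℂ)^2 = 0

/-- A Schwartz-regular solution of the linear Schrödinger equation with harmonic
potential, `i ∂ₜ w - Δw + |x|² w = 0`. -/
def IsLinSolution (w : ℝ → SchwartzMap E2 ℂ) : Prop :=
  ContDiff ℝ (⊤ : ℕ∞) (fun p : ℝ × E2 => w p.1 p.2) ∧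
  ∀ (t : ℝ) (x : E2), Complex.I * deriv (fun s => w s x) t - lap (fun y => w t y) x
    + (‖x‖ : ℂ)^2 * w t x = 0

/-- Partial derivative for real-valued functions. -/
noncomputable def pdR (i : Fin 2) (f : E2 → ℝ) : E2 → ℝ :=
  fun x => fderiv ℝ f x (EuclideanSpace.single i 1)

/-- The Laplacian for real-valued functions. -/
noncomputable def lapR (f : E2 → ℝ) : E2 → ℝ :=
  fun x => ∑ i : Fin 2, pdR i (pdR i f) x

/-!
Write `w = 1 + |x|²`. Integrating by parts in each direction of an orthonormal basis,
`∫ w |∂ᵢv|² = -∫ ⟪∂ᵢ(w ∂ᵢv), v⟫`, and `∑ᵢ ∂ᵢ(w ∂ᵢv) = w Δv + 2 ∑ᵢ xᵢ ∂ᵢv`. Young's inequality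
bounds twice the absolute value of the integrand by `|Δv|² + 5 w² |v|² + w |∇v|²`, and the last
term is absorbed into the left-hand side, giving the constant `5` in any dimension.
-/

open SchwartzMap LineDeriv Laplacian
open scoped RealInnerProductSpace

theorem SchwartzMap.lineDerivOp_smulLeftCLM_apply {E F : Type*} [NormedAddCommGroup E]
    [NormedSpace ℝ E] [NormedAddCommGroup F] [NormedSpace ℝ F] {g : E → ℝ}
    (hg : g.HasTemperateGrowth) (f : 𝓢(E, F)) (m x : E) :
    ∂_{m} (smulLeftCLM F g f) x = g x • ∂_{m} f x + fderiv ℝ g x m • f x := by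
  rw [lineDerivOp_apply_eq_fderiv, lineDerivOp_apply_eq_fderiv, smulLeftCLM_apply hg,
    fderiv_fun_smul (hg.1.differentiable (by simp) x) f.differentiableAt]
  simp

section IntegrationByParts

variable {E F : Type*} [NormedAddCommGroup E] [NormedSpace ℝ E] [FiniteDimensional ℝ E]
  [MeasurableSpace E] [BorelSpace E] {μ : Measure E} [μ.IsAddHaarMeasure]
  [NormedAddCommGroup F] [InnerProductSpace ℝ F]

theorem SchwartzMap.integrable_inner (f g : 𝓢(E, F)) : Integrable (fun x ↦ ⟪f x, g x⟫) μ :=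
  (pairing (innerSL ℝ) f g).integrable

theorem SchwartzMap.integrable_mul_norm_sq {g : E → ℝ} (hg : g.HasTemperateGrowth)
    (f : 𝓢(E, F)) : Integrable (fun x ↦ g x * ‖f x‖ ^ 2) μ := by
  simpa [smulLeftCLM_apply_apply hg, real_inner_smul_left, real_inner_self_eq_norm_sq]
    using integrable_inner (μ := μ) (smulLeftCLM F g f) f

theorem SchwartzMap.integral_mul_norm_lineDerivOp_sq {g : E → ℝ} (hg : g.HasTemperateGrowth)
    (f : 𝓢(E, F)) (m : E) :
    ∫ x, g x * ‖∂_{m} f x‖ ^ 2 ∂μ = -∫ x, ⟪∂_{m} (smulLeftCLM F g (∂_{m} f)) x, f x⟫ ∂μ := by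
  have h : ∫ x, ⟪smulLeftCLM F g (∂_{m} f) x, ∂_{m} f x⟫ ∂μ
      = -∫ x, ⟪∂_{m} (smulLeftCLM F g (∂_{m} f)) x, f x⟫ ∂μ :=
    integral_bilinear_lineDerivOp_right_eq_neg_left _ f (innerSL ℝ) m
  simpa [smulLeftCLM_apply_apply hg, real_inner_smul_left, real_inner_self_eq_norm_sq] using h

theorem SchwartzMap.integral_mul_sum_norm_lineDerivOp_sq {ι : Type*} [Fintype ι]
    {g : E → ℝ} (hg : g.HasTemperateGrowth) (f : 𝓢(E, F)) (m : ι → E) :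
    ∫ x, g x * ∑ i, ‖∂_{m i} f x‖ ^ 2 ∂μ
      = -∫ x, ⟪(∑ i, ∂_{m i} (smulLeftCLM F g (∂_{m i} f))) x, f x⟫ ∂μ := by
  simp only [Finset.mul_sum, sum_apply, sum_inner]
  rw [integral_finsetSum _ fun i _ ↦ integrable_mul_norm_sq hg _,
    integral_finsetSum _ fun i _ ↦ integrable_inner _ f, ← Finset.sum_neg_distrib]
  exact Finset.sum_congr rfl fun i _ ↦ integral_mul_norm_lineDerivOp_sq hg f (m i)

end IntegrationByParts

section WeightedEstimate

variable {ι E F : Type*} [Fintype ι] [NormedAddCommGroup E] [InnerProductSpace ℝ E]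
  [NormedAddCommGroup F] [InnerProductSpace ℝ F]

theorem fderiv_one_add_norm_sq_apply (x m : E) :
    fderiv ℝ (fun y : E ↦ 1 + ‖y‖ ^ 2) x m = 2 * ⟪x, m⟫ := by
  rw [((hasStrictFDerivAt_norm_sq x).hasFDerivAt.const_add 1).fderiv]
  simp

theorem two_mul_abs_inner_weighted_le (b : OrthonormalBasis ι ℝ E) (x : E) (L u : F)
    (d : ι → F) :
    2 * |⟪(1 + ‖x‖ ^ 2) • L + ∑ i, (2 * ⟪x, b i⟫) • d i, u⟫|
      ≤ ‖L‖ ^ 2 + 5 * ((1 + ‖x‖ ^ 2) ^ 2 * ‖u‖ ^ 2) + (1 + ‖x‖ ^ 2) * ∑ i, ‖d i‖ ^ 2 := by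
  set W := 1 + ‖x‖ ^ 2
  have hW : 1 ≤ W := by simp [W]
  have hL : 2 * |⟪W • L, u⟫| ≤ ‖L‖ ^ 2 + W ^ 2 * ‖u‖ ^ 2 := by
    grw [abs_real_inner_le_norm, norm_smul, Real.norm_of_nonneg (by positivity)]
    nlinarith [sq_nonneg (‖L‖ - W * ‖u‖)]
  have hd (i : ι) : 2 * |⟪(2 * ⟪x, b i⟫) • d i, u⟫| ≤ ‖d i‖ ^ 2 + 4 * ⟪b i, x⟫ ^ 2 * ‖u‖ ^ 2 := by
    grw [abs_real_inner_le_norm, norm_smul, real_inner_comm, Real.norm_eq_abs, abs_mul, abs_two]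
    nlinarith [sq_nonneg (‖d i‖ - 2 * |⟪b i, x⟫| * ‖u‖), sq_abs ⟪b i, x⟫]
  have hparseval : ∑ i, ⟪b i, x⟫ ^ 2 ≤ W ^ 2 := by
    rw [b.sum_sq_inner_right]; nlinarith
  have hd_sum : 0 ≤ ∑ i, ‖d i‖ ^ 2 := by positivity
  calc 2 * |⟪W • L + ∑ i, (2 * ⟪x, b i⟫) • d i, u⟫|
      ≤ 2 * |⟪W • L, u⟫| + ∑ i, 2 * |⟪(2 * ⟪x, b i⟫) • d i, u⟫| := by
        rw [inner_add_left, sum_inner, ← Finset.mul_sum, ← mul_add]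
        gcongr
        exact (abs_add_le _ _).trans (by gcongr; exact Finset.abs_sum_le_sum_abs _ _)
    _ ≤ (‖L‖ ^ 2 + W ^ 2 * ‖u‖ ^ 2) + (∑ i, ‖d i‖ ^ 2 + 4 * (∑ i, ⟪b i, x⟫ ^ 2) * ‖u‖ ^ 2) := by
        rw [Finset.mul_sum, Finset.sum_mul, ← Finset.sum_add_distrib]
        exact add_le_add hL (Finset.sum_le_sum fun i _ ↦ hd i)
    _ ≤ _ := by nlinarith [sq_nonneg ‖u‖]

variable [FiniteDimensional ℝ E]

theorem SchwartzMap.sum_lineDerivOp_smulLeftCLM_lineDerivOp_apply (b : OrthonormalBasis ι ℝ E)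
    {g : E → ℝ} (hg : g.HasTemperateGrowth) (f : 𝓢(E, F)) (x : E) :
    (∑ i, ∂_{b i} (smulLeftCLM F g (∂_{b i} f))) x
      = g x • Δ f x + ∑ i, fderiv ℝ g x (b i) • ∂_{b i} f x := by
  simp [sum_apply, lineDerivOp_smulLeftCLM_apply hg, laplacian_eq_sum b, Finset.sum_add_distrib,
    Finset.smul_sum]

variable [MeasurableSpace E] [BorelSpace E] {μ : Measure E} [μ.IsAddHaarMeasure]

theorem SchwartzMap.integral_weight_mul_sum_norm_lineDerivOp_sq_le (b : OrthonormalBasis ι ℝ E)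
    (f : 𝓢(E, F)) :
    ∫ x, (1 + ‖x‖ ^ 2) * ∑ i, ‖∂_{b i} f x‖ ^ 2 ∂μ
      ≤ ∫ x, ‖Δ f x‖ ^ 2 ∂μ + 5 * ∫ x, (1 + ‖x‖ ^ 2) ^ 2 * ‖f x‖ ^ 2 ∂μ := by
  have hW : (fun x : E ↦ 1 + ‖x‖ ^ 2).HasTemperateGrowth := by fun_prop
  have hW2 : (fun x : E ↦ (1 + ‖x‖ ^ 2) ^ 2).HasTemperateGrowth := by fun_prop
  have hA : Integrable (fun x ↦ ‖Δ f x‖ ^ 2) μ := by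
    simpa using integrable_mul_norm_sq (μ := μ) (g := fun _ ↦ 1) (by fun_prop) (Δ f)
  have hB : Integrable (fun x ↦ (1 + ‖x‖ ^ 2) ^ 2 * ‖f x‖ ^ 2) μ := integrable_mul_norm_sq hW2 f
  have hGrad : Integrable (fun x ↦ (1 + ‖x‖ ^ 2) * ∑ i, ‖∂_{b i} f x‖ ^ 2) μ := by
    simp only [Finset.mul_sum]
    exact integrable_finsetSum _ fun i _ ↦ integrable_mul_norm_sq hW _
  have hAB : Integrable (fun x ↦ ‖Δ f x‖ ^ 2 + 5 * ((1 + ‖x‖ ^ 2) ^ 2 * ‖f x‖ ^ 2)) μ :=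
    hA.add (hB.const_mul 5)
  set D := ∑ i, ∂_{b i} (smulLeftCLM F (fun x : E ↦ 1 + ‖x‖ ^ 2) (∂_{b i} f))
  have hD (x : E) : 2 * |⟪D x, f x⟫|
      ≤ ‖Δ f x‖ ^ 2 + 5 * ((1 + ‖x‖ ^ 2) ^ 2 * ‖f x‖ ^ 2)
        + (1 + ‖x‖ ^ 2) * ∑ i, ‖∂_{b i} f x‖ ^ 2 := by
    simp only [D, sum_lineDerivOp_smulLeftCLM_lineDerivOp_apply b hW, fderiv_one_add_norm_sq_apply]
    exact two_mul_abs_inner_weighted_le b x _ _ _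
  have key : 2 * ∫ x, (1 + ‖x‖ ^ 2) * ∑ i, ‖∂_{b i} f x‖ ^ 2 ∂μ
      ≤ ∫ x, ‖Δ f x‖ ^ 2 + 5 * ((1 + ‖x‖ ^ 2) ^ 2 * ‖f x‖ ^ 2)
        + (1 + ‖x‖ ^ 2) * ∑ i, ‖∂_{b i} f x‖ ^ 2 ∂μ :=
    calc 2 * ∫ x, (1 + ‖x‖ ^ 2) * ∑ i, ‖∂_{b i} f x‖ ^ 2 ∂μ
        = 2 * -∫ x, ⟪D x, f x⟫ ∂μ := by rw [integral_mul_sum_norm_lineDerivOp_sq hW]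
      _ ≤ ∫ x, 2 * |⟪D x, f x⟫| ∂μ := by
        rw [integral_const_mul]
        gcongr
        exact (neg_le_abs _).trans abs_integral_le_integral_abs
      _ ≤ _ := integral_mono ((integrable_inner D f).abs.const_mul 2) (hAB.add hGrad) hD
  rw [integral_add hAB hGrad, integral_add hA (hB.const_mul 5), integral_const_mul] at key
  linarith

end WeightedEstimate

theorem pd_schwartzMap (i : Fin 2) (f : 𝓢(E2, ℂ)) :
    pd i f = ∂_{EuclideanSpace.single i (1 : ℝ)} f :=
  funext fun x ↦ (lineDerivOp_apply_eq_fderiv _ f x).symm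

theorem gradSq_schwartzMap (f : 𝓢(E2, ℂ)) (x : E2) :
    gradSq f x = ∑ i, ‖∂_{EuclideanSpace.basisFun (Fin 2) ℝ i} f x‖ ^ 2 := by
  simp [gradSq, pd_schwartzMap]

theorem lap_schwartzMap (f : 𝓢(E2, ℂ)) : lap f = Δ f := by
  ext x
  simp [lap, pd_schwartzMap, laplacian_eq_sum (EuclideanSpace.basisFun (Fin 2) ℝ)]

/-- `∫ ⟨x⟩² |∇v|² ≤ C (‖Δv‖²_{L²} + ‖⟨x⟩² v‖²_{L²})` for Schwartz functions. -/
theorem weighted_gradient_bound :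
    ∃ C : ℝ, 0 < C ∧ ∀ v : SchwartzMap E2 ℂ,
      (∫ x : E2, (1 + ‖x‖^2) * gradSq (fun y => v y) x)
        ≤ C * ((∫ x : E2, ‖lap (fun y => v y) x‖^2)
          + ∫ x : E2, (1 + ‖x‖^2)^2 * ‖v x‖^2) := by
  refine ⟨5, by norm_num, fun v ↦ ?_⟩
  have h := integral_weight_mul_sum_norm_lineDerivOp_sq_le (μ := volume)
    (EuclideanSpace.basisFun (Fin 2) ℝ) v
  have hlap : 0 ≤ ∫ x, ‖Δ v x‖ ^ 2 := integral_nonneg fun x ↦ by positivity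
  simp only [gradSq_schwartzMap, lap_schwartzMap]
  linarith
end
end

section
/- There exists a constant C > 0 such that for every Schwartz function v : ℝ² → ℂ and every i ∈ {1, 2} one has ‖∇(∂_{x_i} v)‖²_{L²} + ‖ |x| ∂_{x_i} v ‖²_{L²} ≤ C ‖A v‖²_{L²}. -/
open MeasureTheory Complex

noncomputable section

/-!
Write `w = ∂ᵢv`. Since `∂ᵢ|x|² = 2xᵢ`, the harmonic oscillator satisfies `A ∂ᵢ = ∂ᵢ A - 2xᵢ`, and
integrating by parts, `2⟨xᵢv, ∂ᵢv⟩ = -‖v‖²`; hence `⟨Aw, w⟩ = -⟨Av, ∂ᵢw⟩ + ‖v‖²`. The same identity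
gives the uncertainty bound `‖v‖² ≤ ‖xᵢv‖² + ‖∂ᵢv‖² ≤ ⟨Av, v⟩ ≤ ‖Av‖ ‖v‖`, so `‖v‖ ≤ ‖Av‖`, while
`‖∂ᵢw‖² ≤ ⟨Aw, w⟩`. Therefore `⟨Aw, w⟩ ≤ ½‖Av‖² + ½⟨Aw, w⟩ + ‖Av‖²`, i.e. `⟨Aw, w⟩ ≤ 3‖Av‖²`.
All inner products and norms are taken in `L²`.
-/

open LineDeriv Laplacian SchwartzMap
open scoped RealInnerProductSpace

theorem Function.HasTemperateGrowth.fderiv {E F : Type*} [NormedAddCommGroup E] [NormedSpace ℝ E]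
    [NormedAddCommGroup F] [NormedSpace ℝ F] {g : E → F} (hg : g.HasTemperateGrowth) :
    (fderiv ℝ g).HasTemperateGrowth :=
  ⟨hg.1.fderiv_right le_rfl, fun n => by simpa only [norm_iteratedFDeriv_fderiv] using hg.2 (n + 1)⟩

namespace SchwartzMap

section LineDeriv

variable {E F : Type*} [NormedAddCommGroup E] [NormedSpace ℝ E]
  [NormedAddCommGroup F] [NormedSpace ℝ F]

theorem lineDerivOp_comm (m n : E) (f : 𝓢(E, F)) : ∂_{m} (∂_{n} f) = ∂_{n} (∂_{m} f) := by
  ext x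
  have hsymm : IsSymmSndFDerivAt ℝ (⇑f) x := (f.smooth 2).contDiffAt.isSymmSndFDerivAt (by simp)
  have hdiff : DifferentiableAt ℝ (fderiv ℝ (⇑f)) x := (fderivCLM ℝ E F f).differentiableAt
  have second (a b : E) : ∂_{a} (∂_{b} f) x = fderiv ℝ (fderiv ℝ (⇑f)) x a b := by
    change fderiv ℝ (fun y => fderiv ℝ f y b) x a = _
    rw [fderiv_clm_apply hdiff (differentiableAt_const b)]
    simp
  rw [second, second, hsymm]

theorem lineDerivOp_smulLeftCLM {g : E → ℝ} (hg : g.HasTemperateGrowth) (m : E) (f : 𝓢(E, F)) :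
    ∂_{m} (smulLeftCLM F g f) =
      smulLeftCLM F g (∂_{m} f) + smulLeftCLM F (fun x => fderiv ℝ g x m) f := by
  have hdg : (fun x => fderiv ℝ g x m).HasTemperateGrowth :=
    (ContinuousLinearMap.apply ℝ ℝ m).hasTemperateGrowth.comp hg.fderiv
  ext x
  have hgx : DifferentiableAt ℝ g x := hg.1.differentiable (by simp) x
  simp only [lineDerivOp_apply_eq_fderiv, add_apply, smulLeftCLM_apply_apply hg,
    smulLeftCLM_apply_apply hdg, smulLeftCLM_apply hg]
  rw [fderiv_fun_smul hgx f.differentiableAt]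
  simp [add_comm]

end LineDeriv

variable {E H : Type*} [NormedAddCommGroup E] [InnerProductSpace ℝ E] [FiniteDimensional ℝ E]
  [NormedAddCommGroup H] [InnerProductSpace ℝ H]

theorem lineDerivOp_laplacian (m : E) (f : 𝓢(E, H)) : ∂_{m} (Δ f) = Δ (∂_{m} f) := by
  simp only [laplacian_eq_sum (stdOrthonormalBasis ℝ E), lineDerivOp_sum, lineDerivOp_comm m]

def harmonicOscillator : 𝓢(E, H) →L[ℝ] 𝓢(E, H) :=
  -laplacianCLM ℝ E 𝓢(E, H) + smulLeftCLM H (fun x => ‖x‖ ^ 2)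

theorem harmonicOscillator_apply (f : 𝓢(E, H)) :
    harmonicOscillator f = -Δ f + smulLeftCLM H (fun x => ‖x‖ ^ 2) f := by
  simp [harmonicOscillator]

theorem harmonicOscillator_lineDerivOp (m : E) (f : 𝓢(E, H)) :
    harmonicOscillator (∂_{m} f) =
      ∂_{m} (harmonicOscillator f) - (2 : ℝ) • smulLeftCLM H (fun x => ⟪x, m⟫) f := by
  have hsq : (fun x : E => fderiv ℝ (fun y => ‖y‖ ^ 2) x m) = (2 : ℝ) • fun x => ⟪x, m⟫ := by
    ext x; simp [fderiv_norm_sq_apply]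
  rw [harmonicOscillator_apply, harmonicOscillator_apply, lineDerivOp_add, lineDerivOp_neg,
    lineDerivOp_laplacian, lineDerivOp_smulLeftCLM (Function.hasTemperateGrowth_norm_sq E), hsq,
    smulLeftCLM_smul (Function.hasTemperateGrowth_inner_left m)]
  simp only [smul_apply]
  abel

variable [MeasurableSpace E] [BorelSpace E] (μ : Measure E) [μ.IsAddHaarMeasure]

section toLp

variable (p : ENNReal) [Fact (1 ≤ p)]

theorem toLp_zero : (0 : 𝓢(E, H)).toLp p μ = 0 := map_zero (toLpCLM ℝ H p μ)

theorem toLp_add (f g : 𝓢(E, H)) : (f + g).toLp p μ = f.toLp p μ + g.toLp p μ :=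
  map_add (toLpCLM ℝ H p μ) f g

theorem toLp_neg (f : 𝓢(E, H)) : (-f).toLp p μ = -f.toLp p μ := map_neg (toLpCLM ℝ H p μ) f

theorem toLp_sub (f g : 𝓢(E, H)) : (f - g).toLp p μ = f.toLp p μ - g.toLp p μ :=
  map_sub (toLpCLM ℝ H p μ) f g

theorem toLp_smul (c : ℝ) (f : 𝓢(E, H)) : (c • f).toLp p μ = c • f.toLp p μ :=
  map_smul (toLpCLM ℝ H p μ) c f

theorem toLp_sum {ι : Type*} (s : Finset ι) (f : ι → 𝓢(E, H)) :
    (∑ i ∈ s, f i).toLp p μ = ∑ i ∈ s, (f i).toLp p μ :=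
  map_sum (toLpCLM ℝ H p μ) f s

end toLp

theorem inner_toLp_eq_integral (f g : 𝓢(E, H)) :
    ⟪f.toLp 2 μ, g.toLp 2 μ⟫ = ∫ x, ⟪f x, g x⟫ ∂μ := by
  rw [L2.inner_def]
  refine integral_congr_ae ?_
  filter_upwards [coeFn_toLp f 2 μ, coeFn_toLp g 2 μ] with x hf hg
  rw [hf, hg]

theorem norm_toLp_sq_eq_integral (f : 𝓢(E, H)) : ‖f.toLp 2 μ‖ ^ 2 = ∫ x, ‖f x‖ ^ 2 ∂μ := by
  simp only [← real_inner_self_eq_norm_sq, inner_toLp_eq_integral]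

theorem inner_toLp_lineDerivOp_right (f g : 𝓢(E, H)) (m : E) :
    ⟪f.toLp 2 μ, (∂_{m} g).toLp 2 μ⟫ = -⟪(∂_{m} f).toLp 2 μ, g.toLp 2 μ⟫ := by
  simp only [inner_toLp_eq_integral]
  exact integral_bilinear_lineDerivOp_right_eq_neg_left f g (innerSL ℝ) m

theorem inner_toLp_smulLeftCLM_left (g : E → ℝ) (f f' : 𝓢(E, H)) :
    ⟪(smulLeftCLM H g f).toLp 2 μ, f'.toLp 2 μ⟫ = ⟪f.toLp 2 μ, (smulLeftCLM H g f').toLp 2 μ⟫ := by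
  by_cases hg : g.HasTemperateGrowth
  · simp only [inner_toLp_eq_integral, smulLeftCLM_apply_apply hg, real_inner_smul_left,
      real_inner_smul_right]
  · simp [smulLeftCLM, hg, toLp_zero]

variable {ι : Type*} [Fintype ι]

theorem inner_toLp_harmonicOscillator_self (b : OrthonormalBasis ι ℝ E) (f : 𝓢(E, H)) :
    ⟪(harmonicOscillator f).toLp 2 μ, f.toLp 2 μ⟫ =
      ∑ i, ‖(∂_{b i} f).toLp 2 μ‖ ^ 2 + ∫ x, ‖x‖ ^ 2 * ‖f x‖ ^ 2 ∂μ := by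
  have kinetic (i : ι) :
      ⟪(∂_{b i} (∂_{b i} f)).toLp 2 μ, f.toLp 2 μ⟫ = -‖(∂_{b i} f).toLp 2 μ‖ ^ 2 := by
    rw [← real_inner_self_eq_norm_sq, inner_toLp_lineDerivOp_right, neg_neg]
  have potential : ⟪(smulLeftCLM H (fun x => ‖x‖ ^ 2) f).toLp 2 μ, f.toLp 2 μ⟫ =
      ∫ x, ‖x‖ ^ 2 * ‖f x‖ ^ 2 ∂μ := by
    simp only [inner_toLp_eq_integral,
      smulLeftCLM_apply_apply (Function.hasTemperateGrowth_norm_sq E), real_inner_smul_left,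
      real_inner_self_eq_norm_sq]
  rw [harmonicOscillator_apply, laplacian_eq_sum b, toLp_add, toLp_neg, toLp_sum, inner_add_left,
    inner_neg_left, sum_inner, potential]
  simp only [kinetic, Finset.sum_neg_distrib, neg_neg]

theorem two_mul_inner_toLp_smulLeftCLM_inner_lineDerivOp (m : E) (f : 𝓢(E, H)) :
    2 * ⟪(smulLeftCLM H (fun x => ⟪x, m⟫) f).toLp 2 μ, (∂_{m} f).toLp 2 μ⟫ =
      -(‖m‖ ^ 2 * ‖f.toLp 2 μ‖ ^ 2) := by
  have hderiv : (fun x : E => fderiv ℝ (fun y => ⟪y, m⟫) x m) = fun _ => ‖m‖ ^ 2 := by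
    ext x; simp [fderiv_inner_apply]
  have h := inner_toLp_lineDerivOp_right μ (smulLeftCLM H (fun x => ⟪x, m⟫) f) f m
  rw [lineDerivOp_smulLeftCLM (Function.hasTemperateGrowth_inner_left m), hderiv,
    smulLeftCLM_const, toLp_add, inner_add_left, inner_toLp_smulLeftCLM_left μ _ (∂_{m} f),
    real_inner_comm ((smulLeftCLM H (fun x => ⟪x, m⟫) f).toLp 2 μ)] at h
  simp only [smul_apply, ContinuousLinearMap.id_apply, toLp_smul, real_inner_smul_left,
    real_inner_self_eq_norm_sq] at h
  linarith

theorem integrable_norm_sq_mul_norm_sq (f : 𝓢(E, H)) :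
    Integrable (fun x => ‖x‖ ^ 2 * ‖f x‖ ^ 2) μ := by
  have h := (pairing (innerSL ℝ) (smulLeftCLM H (fun x => ‖x‖ ^ 2) f) f).integrable (μ := μ)
  refine h.congr (Filter.Eventually.of_forall fun x => ?_)
  rw [pairing_apply_apply, innerSL_apply_apply,
    smulLeftCLM_apply_apply (Function.hasTemperateGrowth_norm_sq E), real_inner_smul_left,
    real_inner_self_eq_norm_sq]

theorem norm_toLp_smulLeftCLM_inner_sq_le (m : E) (f : 𝓢(E, H)) :
    ‖(smulLeftCLM H (fun x => ⟪x, m⟫) f).toLp 2 μ‖ ^ 2 ≤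
      ‖m‖ ^ 2 * ∫ x, ‖x‖ ^ 2 * ‖f x‖ ^ 2 ∂μ := by
  rw [norm_toLp_sq_eq_integral, ← integral_const_mul]
  refine integral_mono (((smulLeftCLM H _ f).memLp 2 μ).integrable_norm_pow two_ne_zero)
    ((integrable_norm_sq_mul_norm_sq μ f).const_mul _) fun x => ?_
  have hx : ⟪x, m⟫ ^ 2 ≤ (‖x‖ * ‖m‖) ^ 2 :=
    sq_le_sq.mpr ((abs_real_inner_le_norm x m).trans (le_abs_self _))
  simp only [smulLeftCLM_apply_apply (Function.hasTemperateGrowth_inner_left m), norm_smul,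
    mul_pow, Real.norm_eq_abs, sq_abs]
  nlinarith [sq_nonneg ‖f x‖]

theorem norm_toLp_lineDerivOp_sq_add_integral_le (b : OrthonormalBasis ι ℝ E) (i : ι)
    (f : 𝓢(E, H)) :
    ‖(∂_{b i} f).toLp 2 μ‖ ^ 2 + ∫ x, ‖x‖ ^ 2 * ‖f x‖ ^ 2 ∂μ ≤
      ⟪(harmonicOscillator f).toLp 2 μ, f.toLp 2 μ⟫ := by
  rw [inner_toLp_harmonicOscillator_self μ b]
  gcongr
  exact Finset.single_le_sum (fun j _ => sq_nonneg ‖(∂_{b j} f).toLp 2 μ‖) (Finset.mem_univ i)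

theorem norm_toLp_sq_le_inner_harmonicOscillator (b : OrthonormalBasis ι ℝ E) (i : ι)
    (f : 𝓢(E, H)) :
    ‖f.toLp 2 μ‖ ^ 2 ≤ ⟪(harmonicOscillator f).toLp 2 μ, f.toLp 2 μ⟫ := by
  have hm : ‖b i‖ = 1 := b.orthonormal.1 i
  have hid := two_mul_inner_toLp_smulLeftCLM_inner_lineDerivOp μ (b i) f
  have hpot := norm_toLp_smulLeftCLM_inner_sq_le μ (b i) f
  have hQ := norm_toLp_lineDerivOp_sq_add_integral_le μ b i f
  have hcs := neg_le_of_abs_le <| abs_real_inner_le_norm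
    ((smulLeftCLM H (fun x => ⟪x, b i⟫) f).toLp 2 μ) ((∂_{b i} f).toLp 2 μ)
  rw [hm] at hid hpot
  nlinarith [two_mul_le_add_sq ‖(smulLeftCLM H (fun x => ⟪x, b i⟫) f).toLp 2 μ‖
    ‖(∂_{b i} f).toLp 2 μ‖]

theorem norm_toLp_le_norm_toLp_harmonicOscillator (b : OrthonormalBasis ι ℝ E) (i : ι)
    (f : 𝓢(E, H)) :
    ‖f.toLp 2 μ‖ ≤ ‖(harmonicOscillator f).toLp 2 μ‖ := by
  have h := (norm_toLp_sq_le_inner_harmonicOscillator μ b i f).trans (real_inner_le_norm _ _)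
  nlinarith [norm_nonneg (f.toLp 2 μ), norm_nonneg ((harmonicOscillator f).toLp 2 μ)]

theorem inner_toLp_harmonicOscillator_lineDerivOp_self_le (b : OrthonormalBasis ι ℝ E) (i : ι)
    (v : 𝓢(E, H)) :
    ⟪(harmonicOscillator (∂_{b i} v)).toLp 2 μ, (∂_{b i} v).toLp 2 μ⟫ ≤
      3 * ‖(harmonicOscillator v).toLp 2 μ‖ ^ 2 := by
  have hm : ‖b i‖ = 1 := b.orthonormal.1 i
  have hcomm : ⟪(harmonicOscillator (∂_{b i} v)).toLp 2 μ, (∂_{b i} v).toLp 2 μ⟫ =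
      -⟪(harmonicOscillator v).toLp 2 μ, (∂_{b i} (∂_{b i} v)).toLp 2 μ⟫ + ‖v.toLp 2 μ‖ ^ 2 := by
    have hibp := inner_toLp_lineDerivOp_right μ (harmonicOscillator v) (∂_{b i} v) (b i)
    have hid := two_mul_inner_toLp_smulLeftCLM_inner_lineDerivOp μ (b i) v
    rw [hm] at hid
    rw [harmonicOscillator_lineDerivOp, toLp_sub, toLp_smul, inner_sub_left, real_inner_smul_left]
    linarith
  have hQ := norm_toLp_lineDerivOp_sq_add_integral_le μ b i (∂_{b i} v)
  have hpot : 0 ≤ ∫ x, ‖x‖ ^ 2 * ‖(∂_{b i} v) x‖ ^ 2 ∂μ :=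
    integral_nonneg fun x => by positivity
  have hv := norm_toLp_le_norm_toLp_harmonicOscillator μ b i v
  have hcs := neg_le_of_abs_le <| abs_real_inner_le_norm
    ((harmonicOscillator v).toLp 2 μ) ((∂_{b i} (∂_{b i} v)).toLp 2 μ)
  nlinarith [sq_nonneg (‖(harmonicOscillator v).toLp 2 μ‖ - ‖(∂_{b i} (∂_{b i} v)).toLp 2 μ‖),
    norm_nonneg (v.toLp 2 μ)]

end SchwartzMap

theorem pd_eq_lineDerivOp (i : Fin 2) (f : 𝓢(E2, ℂ)) :
    pd i f = ⇑(∂_{EuclideanSpace.basisFun (Fin 2) ℝ i} f : 𝓢(E2, ℂ)) := by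
  rw [EuclideanSpace.basisFun_apply]
  rfl

theorem Aop_eq_harmonicOscillator (f : 𝓢(E2, ℂ)) : Aop f = ⇑(harmonicOscillator f) := by
  ext x
  simp only [Aop, lap, harmonicOscillator_apply,
    laplacian_eq_sum (EuclideanSpace.basisFun (Fin 2) ℝ), pd_eq_lineDerivOp, add_apply, neg_apply,
    sum_apply, smulLeftCLM_apply_apply (Function.hasTemperateGrowth_norm_sq E2), Complex.real_smul]
  push_cast
  rfl

theorem integral_gradSq (f : 𝓢(E2, ℂ)) :
    ∫ x, gradSq f x = ∑ j, ‖(∂_{EuclideanSpace.basisFun (Fin 2) ℝ j} f).toLp 2‖ ^ 2 := by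
  simp only [gradSq, pd_eq_lineDerivOp, norm_toLp_sq_eq_integral]
  exact integral_finsetSum _ fun j _ =>
    ((∂_{EuclideanSpace.basisFun (Fin 2) ℝ j} f).memLp 2 volume).integrable_norm_pow two_ne_zero

/-- `⟨A ∂_{x_i} v, ∂_{x_i} v⟩ = ‖∇(∂_{x_i}v)‖² + ‖|x| ∂_{x_i}v‖² ≤ C ‖Av‖²_{L²}`
for Schwartz functions. -/
theorem derivative_quadratic_form_bound :
    ∃ C : ℝ, 0 < C ∧ ∀ (v : SchwartzMap E2 ℂ) (i : Fin 2),
      (∫ x : E2, gradSq (pd i (fun y => v y)) x)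
          + (∫ x : E2, ‖x‖^2 * ‖pd i (fun y => v y) x‖^2)
        ≤ C * ∫ x : E2, ‖Aop (fun y => v y) x‖^2 := by
  refine ⟨3, by norm_num, fun v i => ?_⟩
  have hA : ∫ x, ‖Aop v x‖ ^ 2 = ‖(harmonicOscillator v).toLp 2‖ ^ 2 := by
    rw [Aop_eq_harmonicOscillator, norm_toLp_sq_eq_integral]
  rw [pd_eq_lineDerivOp, integral_gradSq, hA,
    ← inner_toLp_harmonicOscillator_self volume (EuclideanSpace.basisFun (Fin 2) ℝ)]
  exact inner_toLp_harmonicOscillator_lineDerivOp_self_le volume _ i v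
end
end
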